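/- arXiv:1210.4307 — 2 statements merged into one kernel-verified Lean document; each statement's English description precedes it below -/
import Mathlib

section
/- Let p be a prime, m ≥ 1, and θ a nontrivial additive character of ℚ_p. Let f : GL_m(ℚ_p) → ℂ be a continuous function, and suppose there exists a compact open subgroup C of the additive group (M_m(ℚ_p), +) such that θ(tr(gx)) · f(g) = f(g) for every g ∈ GL_m(ℚ_p) and every x ∈ C. Then there is a Schwartz–Bruhat function ξ : M_m(ℚ_p) → ℂ with f(g) = f(g)·ξ(g) for all g ∈ GL_m(ℚ_p). Consequently, for every Haar measure on the locally compact group GL_m(ℚ_p) and every k ∈ ℤ, the function f is integrable over the set {g ∈ GL_m(ℚ_p) : ‖det g‖_p = p^{−k}}, and there is an integer N such that this integral vanishes for every k < N. -/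
/-!
Let `K` be the set of matrices `a` with `θ (tr (a x)) = 1` for all `x ∈ C`, an additive subgroup.
If `f g ≠ 0`, the invariance forces `g ∈ K`. The circle has no small subgroups, so by the
ultrametric inequality the continuous character `θ` is trivial near `0`; as `C` is compact, `K` is
open, hence clopen. As `θ ≠ 1` and `C` contains all small multiples of each matrix unit `E_ji`,
the entries `a i j = tr (a E_ji)` of `a ∈ K` are bounded, so `K` is compact and `ξ = 1_K` works.
On a level set `‖det g‖ = r ≠ 0` the support of `f` lies in a compact subset of `GL_m`, which
gives integrability, and `‖det‖` is bounded on `K`, so the integrals vanish for large `r`.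
-/

open MeasureTheory

noncomputable instance (p : ℕ) [Fact p.Prime] : MeasurableSpace ℚ_[p] := borel _
instance (p : ℕ) [Fact p.Prime] : BorelSpace ℚ_[p] := ⟨rfl⟩
noncomputable instance (p m : ℕ) [Fact p.Prime] :
    MeasurableSpace (Matrix (Fin m) (Fin m) ℚ_[p]) := borel _
instance (p m : ℕ) [Fact p.Prime] :
    BorelSpace (Matrix (Fin m) (Fin m) ℚ_[p]) := ⟨rfl⟩

open Filter Topology

theorem Complex.norm_sq_sub_one_sq {w : ℂ} (hw : ‖w‖ = 1) :
    ‖w ^ 2 - 1‖ ^ 2 = ‖w - 1‖ ^ 2 * (4 - ‖w - 1‖ ^ 2) := by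
  have h : w.re * w.re + w.im * w.im = 1 := by
    rw [← Complex.normSq_apply, ← Complex.sq_norm, hw, one_pow]
  rw [Complex.sq_norm, Complex.sq_norm]
  simp only [Complex.normSq_apply, pow_two, Complex.sub_re, Complex.sub_im,
    Complex.mul_re, Complex.mul_im, Complex.one_re, Complex.one_im]
  linear_combination (2 * w.re ^ 2 + 2 * w.im ^ 2 + 2 - 4 * w.re) * h

/-- By `Complex.norm_sq_sub_one_sq`, squaring multiplies the distance to `1` by at least `√3` as
long as that distance is below `1`. -/
theorem Complex.eq_one_of_forall_norm_pow_sub_one_lt {z : ℂ} (hz : ‖z‖ = 1)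
    (h : ∀ n : ℕ, ‖z ^ n - 1‖ < 1) : z = 1 := by
  have growth : ∀ n : ℕ, 3 ^ n * ‖z - 1‖ ^ 2 ≤ ‖z ^ 2 ^ n - 1‖ ^ 2 := by
    intro n
    induction n with
    | zero => simp
    | succ n ih =>
      have hw : ‖z ^ 2 ^ n‖ = 1 := by rw [norm_pow, hz, one_pow]
      have hlt := h (2 ^ n)
      have hle : ‖z ^ 2 ^ n - 1‖ ^ 2 ≤ 1 := by nlinarith [norm_nonneg (z ^ 2 ^ n - 1)]
      rw [pow_succ 2, pow_mul, Complex.norm_sq_sub_one_sq hw, pow_succ 3]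
      nlinarith
  by_contra hne
  have hpos : 0 < ‖z - 1‖ ^ 2 := by
    have : z - 1 ≠ 0 := sub_ne_zero.mpr hne
    positivity
  obtain ⟨n, hn⟩ := pow_unbounded_of_one_lt (1 / ‖z - 1‖ ^ 2) (by norm_num : (1 : ℝ) < 3)
  rw [div_lt_iff₀ hpos] at hn
  nlinarith [growth n, h (2 ^ n), norm_nonneg (z ^ 2 ^ n - 1)]

theorem AddChar.eventually_eq_one {G : Type*} [SeminormedAddCommGroup G] [IsUltrametricDist G]
    (θ : AddChar G Circle) (hθ : Continuous θ) : ∀ᶠ t in 𝓝 (0 : G), θ t = 1 := by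
  have hnear : ∀ᶠ t in 𝓝 (0 : G), dist (θ t) 1 < 1 := by
    simpa using hθ.continuousAt.eventually (Metric.ball_mem_nhds (θ 0) one_pos)
  obtain ⟨δ, hδ, hball⟩ := Metric.eventually_nhds_iff_ball.mp hnear
  refine Metric.eventually_nhds_iff_ball.mpr ⟨δ, hδ, fun t ht => ?_⟩
  refine Circle.coe_eq_one.mp (Complex.eq_one_of_forall_norm_pow_sub_one_lt (Circle.norm_coe _)
    fun n => ?_)
  have hnt : n • t ∈ Metric.ball (0 : G) δ := by
    rw [mem_ball_zero_iff] at ht ⊢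
    exact (IsUltrametricDist.norm_nsmul_le t n).trans_lt ht
  have := hball _ hnt
  rw [AddChar.map_nsmul_eq_pow] at this
  change dist ((θ t ^ n : Circle) : ℂ) ((1 : Circle) : ℂ) < 1 at this
  rwa [Complex.dist_eq, Circle.coe_pow, Circle.coe_one] at this

theorem AddChar.exists_norm_le_of_forall_mul_eq_one {k M : Type*} [NormedField k] [Monoid M]
    {θ : AddChar k M} (hθ : θ ≠ 1) {U : Set k} (hU : U ∈ 𝓝 0) :
    ∃ r : ℝ, ∀ s : k, (∀ c ∈ U, θ (s * c) = 1) → ‖s‖ ≤ r := by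
  obtain ⟨t, ht⟩ := AddChar.ne_one_iff.mp hθ
  obtain ⟨δ, hδ, hball⟩ := Metric.mem_nhds_iff.mp hU
  refine ⟨‖t‖ / δ, fun s hs => le_of_not_gt fun hlt => ht ?_⟩
  have hs0 : s ≠ 0 := norm_pos_iff.mp ((div_nonneg (norm_nonneg t) hδ.le).trans_lt hlt)
  have hc : t / s ∈ U := hball <| by
    rw [mem_ball_zero_iff, norm_div, div_lt_iff₀ (norm_pos_iff.mpr hs0)]
    rwa [div_lt_iff₀ hδ, mul_comm] at hlt
  simpa [mul_div_cancel₀ t hs0] using hs _ hc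

theorem IsClopen.isLocallyConstant_indicator {X Y : Type*} [TopologicalSpace X] [Zero Y]
    {s : Set X} (hs : IsClopen s) (c : Y) : IsLocallyConstant (s.indicator fun _ => c) := by
  refine (IsLocallyConstant.iff_eventually_eq _).mpr fun x => ?_
  by_cases hx : x ∈ s
  · filter_upwards [hs.isOpen.mem_nhds hx] with y hy
    simp [hx, hy]
  · filter_upwards [hs.compl.isOpen.mem_nhds hx] with y hy
    simp [hx, Set.notMem_of_mem_compl hy]

namespace Matrix

section CommRing

variable {n R : Type*} [Fintype n] [CommRing R]

def traceAnnihilator (θ : AddChar R Circle) (C : Set (Matrix n n R)) :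
    AddSubgroup (Matrix n n R) where
  carrier := {a | ∀ x ∈ C, θ (trace (a * x)) = 1}
  zero_mem' x _ := by simp
  add_mem' {a b} ha hb x hx := by
    rw [add_mul, trace_add, AddChar.map_add_eq_mul, ha x hx, hb x hx, one_mul]
  neg_mem' {a} ha x hx := by
    rw [neg_mul, trace_neg, AddChar.map_neg_eq_inv, ha x hx, inv_one]

variable {θ : AddChar R Circle} {C : Set (Matrix n n R)}

theorem mem_traceAnnihilator_of_mul_eq_self {a : Matrix n n R} {z : ℂ} (hz : z ≠ 0)
    (h : ∀ x ∈ C, (θ (trace (a * x)) : ℂ) * z = z) : a ∈ traceAnnihilator θ C :=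
  fun x hx => Circle.coe_eq_one.mp <| (mul_eq_right₀ hz).mp (h x hx)

/-- Tube lemma: `tr (b x)` is uniformly small for `b` near `0` and `x` in the compact set `C`. -/
theorem isOpen_traceAnnihilator [TopologicalSpace R] [IsTopologicalRing R]
    (hθ : ∀ᶠ t in 𝓝 (0 : R), θ t = 1) (hC : IsCompact C) :
    IsOpen (traceAnnihilator θ C : Set (Matrix n n R)) := by
  refine AddSubgroup.isOpen_of_mem_nhds _ (g := 0) ?_
  refine hC.eventually_forall_of_forall_eventually fun y _ => ?_
  have hcont : Continuous fun z : Matrix n n R × Matrix n n R => trace (z.1 * z.2) := by fun_prop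
  have := hcont.tendsto (0, y)
  simp only [zero_mul, trace_zero] at this
  exact this.eventually hθ

theorem isClopen_traceAnnihilator [TopologicalSpace R] [IsTopologicalRing R]
    (hθ : ∀ᶠ t in 𝓝 (0 : R), θ t = 1) (hC : IsCompact C) :
    IsClopen (traceAnnihilator θ C : Set (Matrix n n R)) :=
  let hopen := isOpen_traceAnnihilator hθ hC
  ⟨AddSubgroup.isClosed_of_isOpen _ hopen, hopen⟩

end CommRing

section NormedField

variable {n k : Type*} [Fintype n] [DecidableEq n] [NormedField k]
  {θ : AddChar k Circle} {C : Set (Matrix n n k)}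

theorem exists_norm_entry_le_of_mem_traceAnnihilator (hθ : θ ≠ 1) (hC : C ∈ 𝓝 0) :
    ∃ r : n → n → ℝ, ∀ a ∈ traceAnnihilator θ C, ∀ i j, ‖a i j‖ ≤ r i j := by
  have hentry (i j : n) : ∃ r : ℝ, ∀ a ∈ traceAnnihilator θ C, ‖a i j‖ ≤ r := by
    have hU : {c : k | c • single j i (1 : k) ∈ C} ∈ 𝓝 0 :=
      (continuous_id.smul continuous_const).continuousAt.preimage_mem_nhds (by simpa using hC)
    obtain ⟨r, hr⟩ := AddChar.exists_norm_le_of_forall_mul_eq_one hθ hU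
    refine ⟨r, fun a ha => hr _ fun c hc => ?_⟩
    simpa [trace_mul_single, mul_comm] using ha _ hc
  choose r hr using hentry
  exact ⟨r, fun a ha i j => hr i j a ha⟩

theorem isCompact_traceAnnihilator [ProperSpace k] (hθ : θ ≠ 1)
    (hθ0 : ∀ᶠ t in 𝓝 (0 : k), θ t = 1) (hCcompact : IsCompact C) (hC : C ∈ 𝓝 0) :
    IsCompact (traceAnnihilator θ C : Set (Matrix n n k)) := by
  obtain ⟨r, hr⟩ := exists_norm_entry_le_of_mem_traceAnnihilator hθ hC
  have hbox : IsCompact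
      (Set.univ.pi fun i => Set.univ.pi fun j => Metric.closedBall (0 : k) (r i j)) :=
    isCompact_univ_pi fun i => isCompact_univ_pi fun j => isCompact_closedBall _ _
  refine hbox.of_isClosed_subset (isClopen_traceAnnihilator hθ0 hCcompact).isClosed ?_
  intro a ha i _ j _
  simpa using hr a ha i j

end NormedField

end Matrix

theorem Units.borelSpace_of_isInducing_val {M : Type*} [Monoid M] [TopologicalSpace M]
    [MeasurableSpace M] [BorelSpace M] (h : IsInducing (Units.val : Mˣ → M)) : BorelSpace Mˣ :=
  ⟨by rw [h.eq_induced, borel_comap, ← BorelSpace.measurable_eq]; rfl⟩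

namespace Matrix.GeneralLinearGroup

variable {n k : Type*} [Fintype n] [DecidableEq n]

theorem isEmbedding_val [Field k] [TopologicalSpace k] [IsTopologicalRing k] [ContinuousInv₀ k] :
    IsEmbedding (Units.val : GL n k → Matrix n n k) :=
  Units.isEmbedding_val_mk' (f := Inv.inv)
    (fun a ha => (continuousAt_matrix_inv a <| by
      rw [Ring.inverse_eq_inv']
      exact continuousAt_inv₀ ((isUnit_iff_isUnit_det a).mp ha).ne_zero).continuousWithinAt)
    fun u => (coe_units_inv u).symm

variable [NormedField k]

theorem isCompact_norm_det_eq_inter {K : Set (Matrix n n k)} (hK : IsCompact K) {r : ℝ}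
    (hr : r ≠ 0) :
    IsCompact ({g : GL n k | ‖(g : Matrix n n k).det‖ = r} ∩ Units.val ⁻¹' K) := by
  rw [isEmbedding_val.isCompact_iff]
  convert hK.inter_right
    (isClosed_eq (continuous_id.matrix_det.norm) (continuous_const (y := r))) using 1
  ext a
  refine ⟨?_, fun ⟨haK, ha⟩ => ?_⟩
  · rintro ⟨g, ⟨hg, hgK⟩, rfl⟩
    exact ⟨hgK, hg⟩
  · have hdet : IsUnit a.det := (norm_ne_zero_iff.mp (ha ▸ hr : ‖a.det‖ ≠ 0)).isUnit
    exact ⟨((isUnit_iff_isUnit_det a).mpr hdet).unit, ⟨ha, haK⟩, rfl⟩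

variable [MeasurableSpace (Matrix n n k)] {f : GL n k → ℂ} {K : Set (Matrix n n k)}

theorem exists_setIntegral_norm_det_eq_eq_zero (hK : IsCompact K)
    (hfK : ∀ g : GL n k, f g ≠ 0 → (g : Matrix n n k) ∈ K) (ν : Measure (GL n k)) :
    ∃ B : ℝ, ∀ r, B < r →
      ∫ g in {g : GL n k | ‖(g : Matrix n n k).det‖ = r}, f g ∂ν = 0 := by
  obtain ⟨B, hB⟩ := hK.exists_bound_of_continuousOn continuous_id.matrix_det.continuousOn
  refine ⟨B, fun r hr => setIntegral_eq_zero_of_forall_eq_zero fun g hg => ?_⟩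
  by_contra hfg
  have := hB _ (hfK g hfg)
  rw [id, hg] at this
  linarith

variable [BorelSpace (Matrix n n k)]

theorem integrableOn_norm_det_eq (hf : Continuous f) (hK : IsCompact K)
    (hfK : ∀ g : GL n k, f g ≠ 0 → (g : Matrix n n k) ∈ K)
    (ν : Measure (GL n k)) [IsFiniteMeasureOnCompacts ν] {r : ℝ} (hr : r ≠ 0) :
    IntegrableOn f {g : GL n k | ‖(g : Matrix n n k).det‖ = r} ν := by
  have := Units.borelSpace_of_isInducing_val (isEmbedding_val (n := n) (k := k)).isInducing
  have hS : IsClosed {g : GL n k | ‖(g : Matrix n n k).det‖ = r} :=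
    isClosed_eq (Units.continuous_val.matrix_det.norm) continuous_const
  refine (hf.continuousOn.integrableOn_compact' (isCompact_norm_det_eq_inter hK hr)
    (hS.measurableSet.inter (hK.isClosed.preimage Units.continuous_val).measurableSet))
    |>.of_forall_sdiff_eq_zero hS.measurableSet fun g hg => ?_
  by_contra hfg
  exact hg.2 ⟨hg.1, hfK g hfg⟩

end Matrix.GeneralLinearGroup

theorem smooth_invariant_function_compactly_supported_det_levels_general
    (p : ℕ) [Fact p.Prime] (m : ℕ)
    (θ : AddChar ℚ_[p] Circle) (hθcont : Continuous θ) (hθ : θ ≠ 1)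
    (f : GL (Fin m) ℚ_[p] → ℂ) (hf : Continuous f)
    (C : AddSubgroup (Matrix (Fin m) (Fin m) ℚ_[p]))
    (hCcompact : IsCompact (C : Set (Matrix (Fin m) (Fin m) ℚ_[p])))
    (hCopen : IsOpen (C : Set (Matrix (Fin m) (Fin m) ℚ_[p])))
    (hinv : ∀ (g : GL (Fin m) ℚ_[p]), ∀ x ∈ C,
      (θ (Matrix.trace ((g : Matrix (Fin m) (Fin m) ℚ_[p]) * x)) : ℂ) * f g = f g) :
    (∃ ξ : Matrix (Fin m) (Fin m) ℚ_[p] → ℂ,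
        IsLocallyConstant ξ ∧ HasCompactSupport ξ ∧
          ∀ g : GL (Fin m) ℚ_[p], f g = f g * ξ (g : Matrix (Fin m) (Fin m) ℚ_[p])) ∧
      ∀ (ν : Measure (GL (Fin m) ℚ_[p])), ν.IsHaarMeasure →
        (∀ k : ℤ, IntegrableOn f
            {g : GL (Fin m) ℚ_[p] |
              ‖((g : Matrix (Fin m) (Fin m) ℚ_[p]).det)‖ = (p : ℝ) ^ (-k)} ν) ∧
          ∃ N : ℤ, ∀ k : ℤ, k < N →
            (∫ g in {g : GL (Fin m) ℚ_[p] |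
                ‖((g : Matrix (Fin m) (Fin m) ℚ_[p]).det)‖ = (p : ℝ) ^ (-k)}, f g ∂ν) = 0 := by
  set K : Set (Matrix (Fin m) (Fin m) ℚ_[p]) :=
    ↑(Matrix.traceAnnihilator θ (C : Set (Matrix (Fin m) (Fin m) ℚ_[p])))
  have hθ0 := θ.eventually_eq_one hθcont
  have hKclopen : IsClopen K := Matrix.isClopen_traceAnnihilator hθ0 hCcompact
  have hKcompact : IsCompact K :=
    Matrix.isCompact_traceAnnihilator hθ hθ0 hCcompact (hCopen.mem_nhds C.zero_mem)
  have hfK : ∀ g : GL (Fin m) ℚ_[p], f g ≠ 0 → (g : Matrix (Fin m) (Fin m) ℚ_[p]) ∈ K :=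
    fun g hg => Matrix.mem_traceAnnihilator_of_mul_eq_self hg (hinv g)
  have hp : (1 : ℝ) < p := by exact_mod_cast (Fact.out : p.Prime).one_lt
  refine ⟨⟨K.indicator fun _ => 1, hKclopen.isLocallyConstant_indicator 1,
    .intro' hKcompact hKclopen.isClosed fun a ha => Set.indicator_of_notMem ha _, fun g => ?_⟩,
    fun ν _ => ⟨fun k => ?_, ?_⟩⟩
  · by_cases hg : f g = 0
    · simp [hg]
    · simp [Set.indicator_of_mem (hfK g hg)]
  · exact Matrix.GeneralLinearGroup.integrableOn_norm_det_eq hf hKcompact hfK ν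
      (zpow_pos (by linarith) _).ne'
  · obtain ⟨B, hB⟩ :=
      Matrix.GeneralLinearGroup.exists_setIntegral_norm_det_eq_eq_zero hKcompact hfK ν
    obtain ⟨N, hN⟩ := pow_unbounded_of_one_lt B hp
    refine ⟨-N, fun k hk => hB _ (hN.trans_le ?_)⟩
    rw [← zpow_natCast]
    exact zpow_le_zpow_right₀ hp.le (by omega)

/-- Let `θ` be a nontrivial additive character of `ℚ_p` and `f` a continuous function on
`GL_m(ℚ_p)`.  If there is a compact open subgroup `C` of `(M_m(ℚ_p), +)` such that
`θ(tr(gx)) · f(g) = f(g)` for all `g ∈ GL_m(ℚ_p)` and `x ∈ C`, then there is a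
Schwartz–Bruhat function `ξ` on `M_m(ℚ_p)` with `f = f·ξ` on `GL_m(ℚ_p)`; consequently, for
every Haar measure `ν` on `GL_m(ℚ_p)` and every `k ∈ ℤ`, `f` is integrable on
`{g : ‖det g‖ = p^{-k}}`, and there is `N ∈ ℤ` such that the integral vanishes for `k < N`. -/
theorem smooth_invariant_function_compactly_supported_det_levels
    (p : ℕ) [Fact p.Prime] (m : ℕ) (hm : 1 ≤ m)
    (θ : AddChar ℚ_[p] Circle) (hθcont : Continuous θ) (hθ : θ ≠ 1)
    (f : GL (Fin m) ℚ_[p] → ℂ) (hf : Continuous f)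
    (C : AddSubgroup (Matrix (Fin m) (Fin m) ℚ_[p]))
    (hCcompact : IsCompact (C : Set (Matrix (Fin m) (Fin m) ℚ_[p])))
    (hCopen : IsOpen (C : Set (Matrix (Fin m) (Fin m) ℚ_[p])))
    (hinv : ∀ (g : GL (Fin m) ℚ_[p]), ∀ x ∈ C,
      (θ (Matrix.trace ((g : Matrix (Fin m) (Fin m) ℚ_[p]) * x)) : ℂ) * f g = f g) :
    (∃ ξ : Matrix (Fin m) (Fin m) ℚ_[p] → ℂ,
        IsLocallyConstant ξ ∧ HasCompactSupport ξ ∧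
          ∀ g : GL (Fin m) ℚ_[p], f g = f g * ξ (g : Matrix (Fin m) (Fin m) ℚ_[p])) ∧
      ∀ (ν : Measure (GL (Fin m) ℚ_[p])), ν.IsHaarMeasure →
        (∀ k : ℤ, IntegrableOn f
            {g : GL (Fin m) ℚ_[p] |
              ‖((g : Matrix (Fin m) (Fin m) ℚ_[p]).det)‖ = (p : ℝ) ^ (-k)} ν) ∧
          ∃ N : ℤ, ∀ k : ℤ, k < N →
            (∫ g in {g : GL (Fin m) ℚ_[p] |
                ‖((g : Matrix (Fin m) (Fin m) ℚ_[p]).det)‖ = (p : ℝ) ^ (-k)}, f g ∂ν) = 0 :=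
  smooth_invariant_function_compactly_supported_det_levels_general p m θ hθcont hθ f hf C hCcompact
    hCopen hinv
end

section
/- Let p be a prime, m ≥ 1, θ a nontrivial additive character of ℚ_p, and μ a Haar measure on (M_m(ℚ_p), +). Let f : M_m(ℚ_p) → ℂ be locally constant and μ-integrable. If the Fourier transform f̂(g) = ∫ f(y) θ(tr(gy)) dμ(y) vanishes for every invertible matrix g ∈ GL_m(ℚ_p), then f is identically zero. -/
open MeasureTheory

/-!
The Fourier transform of an integrable function is continuous and the invertible matrices are
dense, so `f̂` vanishes everywhere; after a translation it suffices to show `f 0 = 0`.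
Let `S` be the lattice of matrices with entries in a large ball and `T` its annihilator for the
pairing `(x, ξ) ↦ θ (tr (x ξ))`. Since `θ` is nontrivial, `T` lies in a small lattice on which
`f` is constant; since the circle has no small subgroups, `θ` is trivial near `0` and `T`
contains a lattice, so `0 < μ T < ∞`. Self-adjointness of the Fourier transform against the
indicator of `S`, together with orthogonality of characters on `S`, gives
`0 = ∫_S f̂ = μ S * ∫_T f = μ S * μ T * f 0`.
-/

open Filter Topology Metric Matrix VectorFourier

theorem Complex.eq_one_of_forall_norm_pow_sub_one_le {w : ℂ} (hw : ∀ n : ℕ, ‖w ^ n - 1‖ ≤ 2⁻¹) :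
    w = 1 := by
  by_contra hw1
  have hpos : 0 < ‖w - 1‖ := norm_pos_iff.mpr (sub_ne_zero.mpr hw1)
  -- The partial geometric sums have real part at least `N / 2` but bounded norm.
  have hbound (N : ℕ) : (N : ℝ) / 2 ≤ 2⁻¹ / ‖w - 1‖ := calc
    (N : ℝ) / 2 = ∑ _k ∈ Finset.range N, (2⁻¹ : ℝ) := by simp [div_eq_mul_inv]
    _ ≤ ∑ k ∈ Finset.range N, (w ^ k).re := Finset.sum_le_sum fun k _ => by
        have := (abs_le.mp ((abs_re_le_norm _).trans (hw k))).1
        rw [sub_re, one_re] at this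
        linarith
    _ = (∑ k ∈ Finset.range N, w ^ k).re := (re_sum _ _).symm
    _ ≤ ‖∑ k ∈ Finset.range N, w ^ k‖ := re_le_norm _
    _ = ‖w ^ N - 1‖ / ‖w - 1‖ := by rw [geom_sum_eq hw1, norm_div]
    _ ≤ 2⁻¹ / ‖w - 1‖ := by gcongr; exact hw N
  obtain ⟨N, hN⟩ := exists_nat_gt (1 / ‖w - 1‖)
  have := hbound N
  rw [div_le_div_iff₀ two_pos hpos] at this
  rw [div_lt_iff₀ hpos] at hN
  linarith

theorem AddChar.eventually_eq_one_of_continuous {A : Type*} [AddGroup A] [TopologicalSpace A]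
    [NonarchimedeanAddGroup A] {θ : AddChar A Circle} (hθ : Continuous θ) :
    ∀ᶠ x in 𝓝 0, θ x = 1 := by
  have hU : ∀ᶠ x in 𝓝 (0 : A), ‖(θ x : ℂ) - 1‖ < 2⁻¹ := by
    have : Continuous fun x => (θ x : ℂ) := by fun_prop
    simpa [dist_eq_norm] using
      (this.tendsto' 0 1 (by simp)).eventually (ball_mem_nhds 1 (by norm_num : (0 : ℝ) < 2⁻¹))
  obtain ⟨H, hH⟩ := NonarchimedeanAddGroup.is_nonarchimedean _ hU
  filter_upwards [H.mem_nhds_zero] with x hx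
  refine Circle.ext (Complex.eq_one_of_forall_norm_pow_sub_one_le fun k => ?_)
  have : ‖(θ (k • x) : ℂ) - 1‖ < 2⁻¹ := hH (H.nsmul_mem hx k)
  rw [AddChar.map_nsmul_eq_pow, Circle.coe_pow] at this
  exact this.le

open scoped Classical in
theorem AddChar.setIntegral_addSubgroup {G : Type*} [AddGroup G] [MeasurableSpace G]
    [MeasurableAdd G] (μ : Measure G) [μ.IsAddLeftInvariant] {H : AddSubgroup G}
    (hH : MeasurableSet (H : Set G)) (ψ : AddChar G Circle) :
    ∫ g in H, (ψ g : ℂ) ∂μ = if ∀ h ∈ H, ψ h = 1 then (μ.real H : ℂ) else 0 := by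
  split_ifs with hψ
  · rw [setIntegral_congr_fun (g := fun _ => 1) hH fun g hg => by simp [hψ g hg],
      setIntegral_const, Complex.real_smul, mul_one]
  push Not at hψ
  obtain ⟨h, hh, hψh⟩ := hψ
  -- Translating by `h ∈ H` multiplies the integral by `ψ h ≠ 1`.
  have htrans : ∫ g in H, (ψ g : ℂ) ∂μ = ψ h * ∫ g in H, (ψ g : ℂ) ∂μ := calc
    ∫ g in H, (ψ g : ℂ) ∂μ = ∫ g, (H : Set G).indicator (fun g => (ψ g : ℂ)) (h + g) ∂μ := by
      rw [integral_add_left_eq_self, integral_indicator hH]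
    _ = ∫ g, ψ h * (H : Set G).indicator (fun g => (ψ g : ℂ)) g ∂μ := by
      congr 1 with g
      simp only [Set.indicator_apply, SetLike.mem_coe, H.add_mem_cancel_left hh,
        AddChar.map_add_eq_mul, Circle.coe_mul, mul_ite, mul_zero]
    _ = ψ h * ∫ g in H, (ψ g : ℂ) ∂μ := by rw [integral_const_mul, integral_indicator hH]
  have hne : (ψ h : ℂ) ≠ 1 := fun h1 => hψh (Circle.ext h1)
  have : (1 - (ψ h : ℂ)) * ∫ g in H, (ψ g : ℂ) ∂μ = 0 := by linear_combination htrans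
  exact (mul_eq_zero.mp this).resolve_left (sub_ne_zero.mpr hne.symm)

theorem MeasureTheory.measureReal_pos_of_isOpen_subset_of_subset_isCompact {X : Type*}
    [TopologicalSpace X] [MeasurableSpace X] {μ : Measure X} [μ.IsOpenPosMeasure]
    [IsFiniteMeasureOnCompacts μ] {U s C : Set X} (hU : IsOpen U) (hU0 : U.Nonempty)
    (hC : IsCompact C) (hUs : U ⊆ s) (hsC : s ⊆ C) : 0 < μ.real s :=
  ENNReal.toReal_pos (ne_bot_of_le_ne_bot (hU.measure_ne_zero μ hU0) (measure_mono hUs))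
    (ne_top_of_le_ne_top hC.measure_ne_top (measure_mono hsC))

namespace VectorFourier

variable {𝕜 V W : Type*} [CommRing 𝕜] [AddCommGroup V] [Module 𝕜 V] [AddCommGroup W] [Module 𝕜 W]

def charAnnihilator (e : AddChar 𝕜 Circle) (L : V →ₗ[𝕜] W →ₗ[𝕜] 𝕜) (S : Set W) : Set V :=
  {x | ∀ ξ ∈ S, e (L x ξ) = 1}

variable {e : AddChar 𝕜 Circle} {L : V →ₗ[𝕜] W →ₗ[𝕜] 𝕜}
  [TopologicalSpace 𝕜] [TopologicalSpace V] [TopologicalSpace W]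

theorem isClosed_charAnnihilator (he : Continuous e) (hL : Continuous fun p : V × W => L p.1 p.2)
    (S : Set W) : IsClosed (charAnnihilator e L S) := by
  simp only [charAnnihilator, Set.ofPred_forall]
  exact isClosed_biInter fun ξ _ => isClosed_eq (by fun_prop) continuous_const

theorem setIntegral_fourierIntegral_addSubgroup [IsTopologicalRing 𝕜] [MeasurableSpace V]
    [BorelSpace V] [MeasurableSpace W] [BorelSpace W] [SecondCountableTopologyEither W V]
    [MeasurableAdd W] {μ : Measure V} {ν : Measure W} [SigmaFinite μ] [SigmaFinite ν]
    [ν.IsAddLeftInvariant]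
    (he : Continuous e) (hL : Continuous fun p : V × W => L p.1 p.2)
    {f : V → ℂ} (hf : Integrable f μ) {S : AddSubgroup W} (hS : MeasurableSet (S : Set W))
    (hSν : ν S ≠ ⊤) :
    ∫ ξ in S, fourierIntegral e μ L f ξ ∂ν = ν.real S * ∫ x in charAnnihilator e L S, f x ∂μ := by
  set T := charAnnihilator e L S
  have hT : MeasurableSet T := (isClosed_charAnnihilator he hL _).measurableSet
  have h1S : Integrable ((S : Set W).indicator fun _ => (1 : ℂ)) ν :=
    (integrableOn_const hSν).integrable_indicator hS
  have hfourier_indicator (x : V) : fourierIntegral e ν L.flip ((S : Set W).indicator fun _ => 1) x =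
      T.indicator (fun _ => (ν.real S : ℂ)) x := by
    set ψ := e.compAddMonoidHom (-L x).toAddMonoidHom
    have hψT : (∀ ξ ∈ S, ψ ξ = 1) ↔ x ∈ T := by
      simp [ψ, T, charAnnihilator, AddChar.map_neg_eq_inv]
    calc fourierIntegral e ν L.flip ((S : Set W).indicator fun _ => 1) x
        = ∫ ξ in S, (ψ ξ : ℂ) ∂ν := by
          rw [fourierIntegral, ← integral_indicator hS]
          congr 1 with ξ
          by_cases hξ : ξ ∈ S <;> simp [hξ, ψ, Circle.smul_def]
      _ = T.indicator (fun _ => (ν.real S : ℂ)) x := by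
          rw [AddChar.setIntegral_addSubgroup ν hS]
          by_cases hx : x ∈ T <;> simp [hx, hψT]
  calc ∫ ξ in S, fourierIntegral e μ L f ξ ∂ν
      = ∫ ξ, fourierIntegral e μ L f ξ • (S : Set W).indicator (fun _ => (1 : ℂ)) ξ ∂ν := by
        rw [← integral_indicator hS]
        congr 1 with ξ
        by_cases hξ : ξ ∈ S <;> simp [hξ]
    _ = ∫ x, f x • fourierIntegral e ν L.flip ((S : Set W).indicator fun _ => 1) x ∂μ :=
        integral_fourierIntegral_smul_eq_flip he hL hf h1S
    _ = ν.real S * ∫ x in T, f x ∂μ := by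
        simp_rw [hfourier_indicator, ← integral_const_mul, ← integral_indicator hT]
        congr 1 with x
        by_cases hx : x ∈ T <;> simp [hx, mul_comm]

end VectorFourier

namespace Matrix

instance secondCountableTopology {m n R : Type*} [Countable m] [Countable n]
    [TopologicalSpace R] [SecondCountableTopology R] : SecondCountableTopology (Matrix m n R) :=
  inferInstanceAs (SecondCountableTopology (m → n → R))

instance locallyCompactSpace {m n R : Type*} [Finite m] [Finite n] [TopologicalSpace R]
    [LocallyCompactSpace R] : LocallyCompactSpace (Matrix m n R) :=
  inferInstanceAs (LocallyCompactSpace (m → n → R))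

theorem dense_setOf_isUnit {K n : Type*} [NontriviallyNormedField K] [Fintype n]
    [DecidableEq n] : Dense {g : Matrix n n K | IsUnit g} := by
  intro g
  have hlim : Tendsto (fun r : K => algebraMap K (Matrix n n K) r + g) (𝓝[≠] 0) (𝓝 g) := by
    have : Continuous fun r : K => algebraMap K (Matrix n n K) r + g := by fun_prop
    simpa using (this.tendsto 0).mono_left nhdsWithin_le_nhds
  refine mem_closure_of_tendsto hlim ?_
  have : Finite (spectrum K (-g)) := (Matrix.finite_spectrum (-g)).to_subtype
  filter_upwards [nhdsNE_of_nhdsNE_sdiff_finite univ_mem this] with r hr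
  simpa using spectrum.notMem_iff.mp hr.2

variable {K n : Type*} [Fintype n]

section CommRing

variable [CommRing K]

def traceMul : Matrix n n K →ₗ[K] Matrix n n K →ₗ[K] K :=
  (LinearMap.mul K (Matrix n n K)).compr₂ (traceLinearMap n K K)

@[simp]
theorem traceMul_apply (x y : Matrix n n K) : traceMul x y = trace (x * y) := rfl

theorem continuous_traceMul [TopologicalSpace K] [IsTopologicalRing K] :
    Continuous fun p : Matrix n n K × Matrix n n K => traceMul p.1 p.2 :=
  (continuous_fst.matrix_mul continuous_snd).matrix_trace

theorem integral_mul_trace_eq_fourierIntegral [MeasurableSpace (Matrix n n K)]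
    (θ : AddChar K Circle) (μ : Measure (Matrix n n K)) (f : Matrix n n K → ℂ)
    (g : Matrix n n K) :
    ∫ y, f y * θ (trace (g * y)) ∂μ = fourierIntegral θ μ traceMul f (-g) := by
  simp only [fourierIntegral, traceMul_apply, Matrix.mul_neg, trace_neg, neg_neg, Circle.smul_def,
    smul_eq_mul, mul_comm (θ _ : ℂ), trace_mul_comm g]

end CommRing

theorem hasBasis_nhds_zero_matrix_closedBall {m : Type*} [Fintype m]
    [SeminormedAddCommGroup K] :
    (𝓝 (0 : Matrix m n K)).HasBasis (fun ε : ℝ => 0 < ε) fun ε => (closedBall (0 : K) ε).matrix := by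
  let := Matrix.seminormedAddCommGroup (m := m) (n := n) (α := K)
  refine nhds_basis_closedBall.congr (fun _ => Iff.rfl) fun ε hε => ?_
  ext x
  simp [Set.matrix, norm_le_iff hε.le]

section NormedField

variable [NormedField K]

theorem charAnnihilator_matrix_closedBall_subset [DecidableEq n] {θ : AddChar K Circle} {c : K}
    (hc : θ c ≠ 1) {ε : ℝ} (hε : 0 < ε) :
    charAnnihilator θ traceMul ((closedBall (0 : K) (‖c‖ / ε)).matrix : Set (Matrix n n K)) ⊆
      (closedBall 0 ε).matrix := by
  intro x hx
  by_contra hxε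
  simp only [Set.mem_matrix, mem_closedBall_zero_iff, not_forall, not_le] at hxε
  obtain ⟨i, j, hij⟩ := hxε
  have hxij : x i j ≠ 0 := norm_pos_iff.mp (hε.trans hij)
  have hξ : single j i (c / x i j) ∈ (closedBall (0 : K) (‖c‖ / ε)).matrix := by
    rw [single_mem_matrix (mem_closedBall_self (by positivity)), mem_closedBall_zero_iff,
      norm_div]
    gcongr
  have := hx _ hξ
  rw [traceMul_apply, trace_mul_single, MulOpposite.smul_eq_mul_unop, MulOpposite.unop_op,
    mul_div_cancel₀ _ hxij] at this
  exact hc this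

variable [IsUltrametricDist K]

theorem norm_trace_mul_le_of_mem_matrix_closedBall {a b : ℝ} (ha : 0 ≤ a) (hb : 0 ≤ b)
    {x y : Matrix n n K} (hx : x ∈ (closedBall (0 : K) a).matrix)
    (hy : y ∈ (closedBall (0 : K) b).matrix) : ‖trace (x * y)‖ ≤ a * b :=
  IsUltrametricDist.norm_sum_le_of_forall_le_of_nonneg (by positivity) fun i _ =>
    IsUltrametricDist.norm_sum_le_of_forall_le_of_nonneg (by positivity) fun k _ => by
      rw [norm_mul]
      exact mul_le_mul (mem_closedBall_zero_iff.mp (hx i k)) (mem_closedBall_zero_iff.mp (hy k i))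
        (norm_nonneg _) ha

theorem matrix_closedBall_subset_charAnnihilator {θ : AddChar K Circle} {δ ρ : ℝ}
    (hδ : ∀ a ∈ closedBall (0 : K) δ, θ a = 1) (hδ0 : 0 ≤ δ) (hρ : 0 < ρ) :
    ((closedBall (0 : K) (δ / ρ)).matrix : Set (Matrix n n K)) ⊆
      charAnnihilator θ traceMul (closedBall (0 : K) ρ).matrix := by
  intro x hx ξ hξ
  refine hδ _ (mem_closedBall_zero_iff.mpr ?_)
  calc ‖traceMul x ξ‖ ≤ δ / ρ * ρ :=
        norm_trace_mul_le_of_mem_matrix_closedBall (by positivity) hρ.le hx hξ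
    _ = δ := div_mul_cancel₀ δ hρ.ne'

theorem apply_zero_eq_zero_of_fourierIntegral_eq_zero [DecidableEq n] [ProperSpace K]
    [MeasurableSpace (Matrix n n K)] [BorelSpace (Matrix n n K)] {θ : AddChar K Circle}
    (hθc : Continuous θ) (hθ : θ ≠ 1) (μ : Measure (Matrix n n K)) [μ.IsAddHaarMeasure]
    {f : Matrix n n K → ℂ} (hf : Integrable f μ) (hf0 : ∀ᶠ y in 𝓝 0, f y = f 0)
    (h𝓕 : fourierIntegral θ μ traceMul f = 0) : f 0 = 0 := by
  obtain ⟨c, hc⟩ := AddChar.ne_one_iff.mp hθ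
  obtain ⟨ε, hε, hfε⟩ := hasBasis_nhds_zero_matrix_closedBall.eventually_iff.mp hf0
  obtain ⟨δ, hδ, hθδ⟩ :=
    nhds_basis_closedBall.eventually_iff.mp (AddChar.eventually_eq_one_of_continuous hθc)
  have hc0 : 0 < ‖c‖ := norm_pos_iff.mpr fun h0 => hc (h0 ▸ θ.map_zero_eq_one)
  have hρ : 0 < ‖c‖ / ε := by positivity
  set S : AddSubgroup (Matrix n n K) :=
    (IsUltrametricDist.closedBall_openAddSubgroup K hρ : AddSubgroup K).matrix
  set T := charAnnihilator θ traceMul (S : Set (Matrix n n K))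
  have hTε : T ⊆ (closedBall 0 ε).matrix := charAnnihilator_matrix_closedBall_subset hc hε
  have hδT : (closedBall 0 (δ / (‖c‖ / ε))).matrix ⊆ T :=
    matrix_closedBall_subset_charAnnihilator hθδ hδ.le hρ
  have hT : MeasurableSet T := (isClosed_charAnnihilator hθc continuous_traceMul _).measurableSet
  have hS : IsOpen (S : Set (Matrix n n K)) := (IsUltrametricDist.isOpen_closedBall 0 hρ.ne').matrix
  have hSc : IsCompact (S : Set (Matrix n n K)) := (isCompact_closedBall 0 _).matrix
  have hSμ : 0 < μ.real S := measureReal_pos_of_isOpen_subset_of_subset_isCompact hS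
    ⟨0, S.zero_mem⟩ hSc subset_rfl subset_rfl
  have hTμ : 0 < μ.real T := measureReal_pos_of_isOpen_subset_of_subset_isCompact
    (IsUltrametricDist.isOpen_closedBall 0 (by positivity)).matrix
    ⟨0, fun _ _ => mem_closedBall_self (by positivity)⟩ (isCompact_closedBall 0 ε).matrix hδT hTε
  have key := setIntegral_fourierIntegral_addSubgroup (ν := μ) hθc continuous_traceMul hf
    hS.measurableSet hSc.measure_ne_top
  rw [h𝓕, setIntegral_congr_fun hT fun y hy => hfε (hTε hy), setIntegral_const] at key
  simpa [hSμ.ne', hTμ.ne'] using key.symm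

end NormedField

end Matrix

theorem fourier_vanishing_on_invertibles_general (p : ℕ) [Fact p.Prime] (m : ℕ)
    (θ : AddChar ℚ_[p] Circle) (hθcont : Continuous θ) (hθ : θ ≠ 1)
    (μ : Measure (Matrix (Fin m) (Fin m) ℚ_[p])) (hμ : μ.IsAddHaarMeasure)
    (f : Matrix (Fin m) (Fin m) ℚ_[p] → ℂ)
    (hf_lc : IsLocallyConstant f) (hf_int : Integrable f μ)
    (h : ∀ g : Matrix (Fin m) (Fin m) ℚ_[p], IsUnit g →
      (∫ y, f y * (θ (Matrix.trace (g * y)) : ℂ) ∂μ) = 0) :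
    f = 0 := by
  have h𝓕 : fourierIntegral θ μ traceMul f = 0 :=
    (fourierIntegral_continuous hθcont continuous_traceMul hf_int).ext_on dense_setOf_isUnit
      continuous_const fun g hg => by
        simpa only [integral_mul_trace_eq_fourierIntegral, neg_neg, Pi.zero_apply]
          using h (-g) hg.neg
  funext x
  have hfx : IsLocallyConstant fun y => f (y + x) := hf_lc.comp_continuous (continuous_add_const x)
  have h𝓕x : fourierIntegral θ μ traceMul (fun y => f (y + x)) = 0 := by
    rw [← Function.comp_def, fourierIntegral_comp_add_right, h𝓕]
    ext
    simp
  simpa using apply_zero_eq_zero_of_fourierIntegral_eq_zero hθcont hθ μ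
    (hf_int.comp_add_right x) (hfx.eventually_eq 0) h𝓕x

/-- Let `θ` be a nontrivial (continuous) additive character of `ℚ_p` and `μ` a Haar measure
on `(M_m(ℚ_p), +)`.  If `f : M_m(ℚ_p) → ℂ` is locally constant and `μ`-integrable, and its
Fourier transform `g ↦ ∫ f(y) θ(tr(gy)) dμ(y)` vanishes for every invertible matrix `g`,
then `f` is identically zero. -/
theorem fourier_vanishing_on_invertibles (p : ℕ) [Fact p.Prime] (m : ℕ) (hm : 1 ≤ m)
    (θ : AddChar ℚ_[p] Circle) (hθcont : Continuous θ) (hθ : θ ≠ 1)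
    (μ : Measure (Matrix (Fin m) (Fin m) ℚ_[p])) (hμ : μ.IsAddHaarMeasure)
    (f : Matrix (Fin m) (Fin m) ℚ_[p] → ℂ)
    (hf_lc : IsLocallyConstant f) (hf_int : Integrable f μ)
    (h : ∀ g : Matrix (Fin m) (Fin m) ℚ_[p], IsUnit g →
      (∫ y, f y * (θ (Matrix.trace (g * y)) : ℂ) ∂μ) = 0) :
    f = 0 :=
  fourier_vanishing_on_invertibles_general p m θ hθcont hθ μ hμ f hf_lc hf_int h
end
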